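/- Let T, N, B : ℝ × ℝ → ℝ³ be smooth maps satisfying the spacelike Frenet equations T_s = κN, N_s = κT + τB, B_s = τN, and the time-evolution equations T_t = αN − βB, N_t = αT + γB, B_t = βT + γN, for smooth scalar functions κ, τ, α, β, γ. If the mixed partials agree (T_st = T_ts, N_st = N_ts, B_st = B_ts) and {T,N,B} is linearly independent at every point, then κ_t = α_s − τβ, τ_t = γ_s + κβ, and κγ = ατ − β_s. -/

import Mathlib

/-- Minkowski inner product on ℝ³ = ℝ × ℝ × ℝ: ⟨a,b⟩ = a₁b₁ + a₂b₂ − a₃b₃. -/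
def mink (a b : ℝ × ℝ × ℝ) : ℝ := a.1 * b.1 + a.2.1 * b.2.1 - a.2.2 * b.2.2

/-- Compatibility of the evolving spacelike Frenet frame in Minkowski 3-space. -/
theorem stmt_0
    (T N B : ℝ → ℝ → ℝ × ℝ × ℝ) (κ τ α β γ : ℝ → ℝ → ℝ)
    (hT : ContDiff ℝ (⊤ : ℕ∞) (Function.uncurry T))
    (hN : ContDiff ℝ (⊤ : ℕ∞) (Function.uncurry N))
    (hB : ContDiff ℝ (⊤ : ℕ∞) (Function.uncurry B))
    (hκ : ContDiff ℝ (⊤ : ℕ∞) (Function.uncurry κ))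
    (hτ : ContDiff ℝ (⊤ : ℕ∞) (Function.uncurry τ))
    (hα : ContDiff ℝ (⊤ : ℕ∞) (Function.uncurry α))
    (hβ : ContDiff ℝ (⊤ : ℕ∞) (Function.uncurry β))
    (hγ : ContDiff ℝ (⊤ : ℕ∞) (Function.uncurry γ))
    -- Frenet equations: T_s = κN, N_s = κT + τB, B_s = τN
    (hTs : ∀ s t, HasDerivAt (fun s' => T s' t) (κ s t • N s t) s)
    (hNs : ∀ s t, HasDerivAt (fun s' => N s' t) (κ s t • T s t + τ s t • B s t) s)
    (hBs : ∀ s t, HasDerivAt (fun s' => B s' t) (τ s t • N s t) s)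
    -- time evolution: T_t = αN − βB, N_t = αT + γB, B_t = βT + γN
    (hTt : ∀ s t, HasDerivAt (fun t' => T s t') (α s t • N s t - β s t • B s t) t)
    (hNt : ∀ s t, HasDerivAt (fun t' => N s t') (α s t • T s t + γ s t • B s t) t)
    (hBt : ∀ s t, HasDerivAt (fun t' => B s t') (β s t • T s t + γ s t • N s t) t)
    -- equality of mixed partials: T_st = T_ts, N_st = N_ts, B_st = B_ts
    (hmixT : ∀ s t, deriv (fun t' => κ s t' • N s t') t
        = deriv (fun s' => α s' t • N s' t - β s' t • B s' t) s)
    (hmixN : ∀ s t, deriv (fun t' => κ s t' • T s t' + τ s t' • B s t') t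
        = deriv (fun s' => α s' t • T s' t + γ s' t • B s' t) s)
    (hmixB : ∀ s t, deriv (fun t' => τ s t' • N s t') t
        = deriv (fun s' => β s' t • T s' t + γ s' t • N s' t) s)
    -- {T, N, B} linearly independent at every point
    (hli : ∀ s t, LinearIndependent ℝ ![T s t, N s t, B s t]) :
    ∀ s t,
      deriv (fun t' => κ s t') t = deriv (fun s' => α s' t) s - τ s t * β s t ∧
      deriv (fun t' => τ s t') t = deriv (fun s' => γ s' t) s + κ s t * β s t ∧
      κ s t * γ s t = α s t * τ s t - deriv (fun s' => β s' t) s := by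
  intro s t
  have mkt : ∀ (f : ℝ → ℝ → ℝ), ContDiff ℝ (⊤ : ℕ∞) (Function.uncurry f) →
      HasDerivAt (fun t' => f s t') (deriv (fun t' => f s t') t) t := by
    intro f hf
    exact (((hf.differentiable (by simp)).comp
      ((differentiable_const s).prodMk differentiable_id)).differentiableAt).hasDerivAt
  have mks : ∀ (f : ℝ → ℝ → ℝ), ContDiff ℝ (⊤ : ℕ∞) (Function.uncurry f) →
      HasDerivAt (fun s' => f s' t) (deriv (fun s' => f s' t) s) s := by
    intro f hf
    exact (((hf.differentiable (by simp)).comp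
      (differentiable_id.prodMk (differentiable_const t))).differentiableAt).hasDerivAt
  have hκt := mkt κ hκ
  have hτt := mkt τ hτ
  have hαs := mks α hα
  have hβs := mks β hβ
  have hγs := mks γ hγ
  set Kt := deriv (fun t' => κ s t') t
  set Tt := deriv (fun t' => τ s t') t
  set As := deriv (fun s' => α s' t) s
  set Bs := deriv (fun s' => β s' t) s
  set Gs := deriv (fun s' => γ s' t) s
  have e1 : Kt • N s t + κ s t • (α s t • T s t + γ s t • B s t)
      = (As • N s t + α s t • (κ s t • T s t + τ s t • B s t))
        - (Bs • B s t + β s t • (τ s t • N s t)) := by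
    have L : deriv (fun t' => κ s t' • N s t') t = _ := (hκt.smul (hNt s t)).deriv
    have R : deriv (fun s' => α s' t • N s' t - β s' t • B s' t) s = _ :=
      ((hαs.smul (hNs s t)).sub (hβs.smul (hBs s t))).deriv
    have h := hmixT s t
    rw [L, R] at h
    linear_combination (norm := module) h
  have e2 : (Kt • T s t + κ s t • (α s t • N s t - β s t • B s t))
      + (Tt • B s t + τ s t • (β s t • T s t + γ s t • N s t))
      = (As • T s t + α s t • (κ s t • N s t))
        + (Gs • B s t + γ s t • (τ s t • N s t)) := by
    have L : deriv (fun t' => κ s t' • T s t' + τ s t' • B s t') t = _ :=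
      ((hκt.smul (hTt s t)).add (hτt.smul (hBt s t))).deriv
    have R : deriv (fun s' => α s' t • T s' t + γ s' t • B s' t) s = _ :=
      ((hαs.smul (hTs s t)).add (hγs.smul (hBs s t))).deriv
    have h := hmixN s t
    rw [L, R] at h
    linear_combination (norm := module) h
  have key := Fintype.linearIndependent_iff.mp (hli s t)
  have sum1 : ∑ i, (![(0:ℝ), Kt - As + τ s t * β s t,
      κ s t * γ s t - α s t * τ s t + Bs]) i • ![T s t, N s t, B s t] i = 0 := by
    simp only [Fin.sum_univ_three, Matrix.cons_val_zero, Matrix.cons_val_one,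
      Matrix.head_cons, Matrix.cons_val_two, Matrix.tail_cons]
    linear_combination (norm := module) e1
  have sum2 : ∑ i, (![Kt - As + τ s t * β s t, (0:ℝ),
      Tt - Gs - κ s t * β s t]) i • ![T s t, N s t, B s t] i = 0 := by
    simp only [Fin.sum_univ_three, Matrix.cons_val_zero, Matrix.cons_val_one,
      Matrix.head_cons, Matrix.cons_val_two, Matrix.tail_cons]
    linear_combination (norm := module) e2
  have c1 := key _ sum1 1
  have c3 := key _ sum1 2
  have c2 := key _ sum2 2
  simp only [Matrix.cons_val_one, Matrix.head_cons, Matrix.cons_val_two,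
    Matrix.tail_cons, Matrix.cons_val_zero] at c1 c2 c3
  refine ⟨by linarith, by linarith, by linarith⟩
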